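/- arXiv:1411.2620 — 2 statements merged into one kernel-verified Lean document; each statement's English description precedes it below -/
import Mathlib

section
/- Let γ > 0, p > 1 and ω > γ²/4. Then the L² norm of φ_ω satisfies ‖φ_ω‖_{L²}² = (4/(p-1)) · ((p+1)/2)^{2/(p-1)} · (2/γ)^{(p-5)/(p-1)} · F(ξ(ω,γ)), where F(ξ) = ξ^{(p-5)/(p-1)} ∫_ξ^1 (1 - s²)^{2/(p-1) - 1} ds for ξ ∈ (0,1). -/
open MeasureTheory Set
open scoped ENNReal

noncomputable section

/-- Inverse hyperbolic tangent. -/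
def artanh (x : ℝ) : ℝ := Real.log ((1 + x) / (1 - x)) / 2

/-- Squared `L²` norm of `v`. -/
def l2Sq (v : ℝ → ℂ) : ℝ := ∫ x : ℝ, ‖v x‖ ^ 2

/-- Squared `L²` norm of the derivative of `v`. -/
def gradSq (v : ℝ → ℂ) : ℝ := ∫ x : ℝ, ‖deriv v x‖ ^ 2

/-- `∫ |v|^(p+1)`, i.e. `‖v‖_{L^{p+1}}^{p+1}`. -/
def lpPow (p : ℝ) (v : ℝ → ℂ) : ℝ := ∫ x : ℝ, ‖v x‖ ^ (p + 1)

/-- `v ∈ H¹(ℝ)`, expressed via its continuous representative: `v` is square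
integrable, absolutely continuous with a.e. derivative `deriv v`, which is
square integrable. -/
def MemH1 (v : ℝ → ℂ) : Prop :=
  Continuous v ∧ MemLp v 2 volume ∧ MemLp (deriv v) 2 volume ∧
    ∀ x : ℝ, v x = v 0 + ∫ t in (0:ℝ)..x, deriv v t

/-- The energy functional `E`. -/
def En (γ p : ℝ) (v : ℝ → ℂ) : ℝ :=
  gradSq v / 2 - γ / 2 * ‖v 0‖ ^ 2 - lpPow p v / (p + 1)

/-- The Nehari functional `K_ω`. -/
def Kfun (γ p ω : ℝ) (v : ℝ → ℂ) : ℝ :=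
  gradSq v + ω * l2Sq v - γ * ‖v 0‖ ^ 2 - lpPow p v

/-- The virial functional `P`. -/
def Pfun (γ p : ℝ) (v : ℝ → ℂ) : ℝ :=
  gradSq v - γ / 2 * ‖v 0‖ ^ 2 - (p - 1) / (2 * (p + 1)) * lpPow p v

/-- The action functional `S_ω`. -/
def Sfun (γ p ω : ℝ) (v : ℝ → ℂ) : ℝ := En γ p v + ω / 2 * l2Sq v

/-- The minimal action `d(ω)` on the Nehari manifold. -/
def dInf (γ p ω : ℝ) : ℝ :=
  sInf {s : ℝ | ∃ v : ℝ → ℂ, MemH1 v ∧ v ≠ 0 ∧ Kfun γ p ω v = 0 ∧ s = Sfun γ p ω v}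

/-- The explicit standing wave profile `φ_ω`. -/
def phi (γ p ω : ℝ) (x : ℝ) : ℝ :=
  ((p + 1) * ω / 2 *
      (1 / Real.cosh ((p - 1) * Real.sqrt ω / 2 * |x| + artanh (γ / (2 * Real.sqrt ω)))) ^ 2)
    ^ (1 / (p - 1))

/-- `φ_ω` as a complex valued function. -/
def phiC (γ p ω : ℝ) : ℝ → ℂ := fun x => (phi γ p ω x : ℂ)

/-- The `L²`-invariant scaling `v^λ(x) = λ^{1/2} v(λ x)`. -/
def scale (l : ℝ) (v : ℝ → ℂ) : ℝ → ℂ := fun x => (Real.sqrt l : ℂ) * v (l * x)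

/-- The set `𝓑_ω`. -/
def inB (γ p ω : ℝ) (v : ℝ → ℂ) : Prop :=
  MemH1 v ∧ 0 < En γ p v ∧ En γ p v < En γ p (phiC γ p ω) ∧
    l2Sq v = l2Sq (phiC γ p ω) ∧ Pfun γ p v < 0 ∧ Kfun γ p ω v < 0

/-! On `x > 0` one has `φ_ω(x)² = C^k sech^{2k}(a x + b)` with `C = (p+1)ω/2`, `k = 2/(p-1)`,
`a = (p-1)√ω/2` and `b = artanh ξ`. The substitution `s = tanh (a x + b)` maps `(0, ∞)` onto
`(ξ, 1)`, with `ds = a sech²(a x + b) dx` and `sech² = 1 - s²`, so by evenness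
`‖φ_ω‖² = (2 C^k / a) ∫_ξ^1 (1 - s²)^{k-1} ds`; what remains is bookkeeping of powers of `√ω`. -/

namespace Real

theorem hasDerivAt_tanh (x : ℝ) : HasDerivAt tanh (1 / cosh x ^ 2) x := by
  have hc : cosh x ≠ 0 := (cosh_pos x).ne'
  have h := (hasDerivAt_sinh x).div (hasDerivAt_cosh x) hc
  rw [show sinh / cosh = tanh from funext fun y => (tanh_eq_sinh_div_cosh y).symm] at h
  refine h.congr_deriv ?_
  rw [← sq, ← sq, cosh_sq_sub_sinh_sq]

theorem strictMono_tanh : StrictMono tanh :=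
  strictMono_of_deriv_pos fun x => by
    rw [(hasDerivAt_tanh x).deriv]
    positivity

theorem one_div_cosh_sq (x : ℝ) : (1 / cosh x) ^ 2 = 1 - tanh x ^ 2 := by
  have hc : cosh x ≠ 0 := (cosh_pos x).ne'
  rw [tanh_eq_sinh_div_cosh]
  field_simp
  linarith [cosh_sq_sub_sinh_sq x]

theorem one_div_cosh_sq_rpow (x k : ℝ) :
    ((1 / cosh x) ^ 2) ^ k = (1 / cosh x) ^ 2 * (1 - tanh x ^ 2) ^ (k - 1) := by
  have hu : (1 / cosh x) ^ 2 ≠ 0 := by positivity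
  rw [← one_div_cosh_sq, rpow_sub_one hu, mul_div_cancel₀ _ hu]

theorem image_tanh_affine_Ioi {a : ℝ} (ha : 0 < a) (b : ℝ) :
    (fun x => tanh (a * x + b)) '' Ioi 0 = Ioo (tanh b) 1 := by
  ext s
  constructor
  · rintro ⟨x, hx, rfl⟩
    exact ⟨strictMono_tanh (by nlinarith [mem_Ioi.1 hx]), tanh_lt_one _⟩
  · rintro ⟨hbs, hs1⟩
    have hs : s ∈ Ioo (-1) 1 := ⟨(neg_one_lt_tanh b).trans hbs, hs1⟩
    have hlt : b < artanh s := by rwa [← strictMono_tanh.lt_iff_lt, tanh_artanh hs]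
    refine ⟨(artanh s - b) / a, div_pos (sub_pos.2 hlt) ha, ?_⟩
    simp only [mul_div_cancel₀ _ ha.ne', sub_add_cancel, tanh_artanh hs]

theorem integral_Ioi_comp_tanh_affine {E : Type*} [NormedAddCommGroup E] [NormedSpace ℝ E]
    {a : ℝ} (ha : 0 < a) (b : ℝ) (g : ℝ → E) :
    ∫ x in Ioi 0, (a * (1 / cosh (a * x + b)) ^ 2) • g (tanh (a * x + b)) =
      ∫ s in Ioo (tanh b) 1, g s := by
  have hderiv (x : ℝ) :
      HasDerivAt (fun x => tanh (a * x + b)) (a * (1 / cosh (a * x + b)) ^ 2) x := by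
    have h := (hasDerivAt_tanh _).comp x (((hasDerivAt_id' x).const_mul a).add_const b)
    refine h.congr_deriv ?_
    simp only [div_pow, one_pow, mul_one]
    ring
  have hmono : StrictMono fun x => tanh (a * x + b) :=
    strictMono_tanh.comp ((strictMono_mul_left_of_pos ha).add_const b)
  rw [← image_tanh_affine_Ioi ha b, integral_image_eq_integral_abs_deriv_smul measurableSet_Ioi
    (fun x _ => (hderiv x).hasDerivWithinAt) hmono.injective.injOn]
  refine setIntegral_congr_fun measurableSet_Ioi fun x _ => ?_
  rw [abs_of_pos (by positivity)]

end Real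

theorem artanh_eq_real_artanh {x : ℝ} (hx : x ∈ Icc (-1) 1) : artanh x = Real.artanh x := by
  rw [artanh, Real.artanh_eq_half_log hx]
  ring

theorem phi_abs (γ p ω x : ℝ) : phi γ p ω |x| = phi γ p ω x := by
  simp only [phi, abs_abs]

theorem phi_sq {γ p ω : ℝ} (hp : -1 ≤ p) (hω : 0 ≤ ω) (x : ℝ) :
    phi γ p ω x ^ 2 = ((p + 1) * ω / 2) ^ (2 / (p - 1)) *
      ((1 / Real.cosh ((p - 1) * √ω / 2 * |x| + artanh (γ / (2 * √ω)))) ^ 2) ^ (2 / (p - 1)) := by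
  have hC : 0 ≤ (p + 1) * ω / 2 := by nlinarith
  rw [phi, ← Real.rpow_natCast, ← Real.rpow_mul (by positivity), Real.mul_rpow hC (by positivity),
    Nat.cast_ofNat, one_div_mul_eq_div]

theorem phi_sq_integral_coeff {γ p ω : ℝ} (hγ : 0 < γ) (hp : 1 < p) (hω : 0 < ω) :
    2 * (((p + 1) * ω / 2) ^ (2 / (p - 1)) / ((p - 1) * √ω / 2)) =
      4 / (p - 1) * ((p + 1) / 2) ^ (2 / (p - 1)) * (2 / γ) ^ ((p - 5) / (p - 1)) *
        (γ / (2 * √ω)) ^ ((p - 5) / (p - 1)) := by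
  set q := √ω
  have hq : 0 < q := Real.sqrt_pos.2 hω
  have hp1 : p - 1 ≠ 0 := by linarith
  have hω_eq : (p + 1) * ω / 2 = (p + 1) / 2 * q ^ (2 : ℝ) := by
    rw [Real.rpow_two, Real.sq_sqrt hω.le]
    ring
  have hexp : 2 * (2 / (p - 1)) = 1 + -((p - 5) / (p - 1)) := by
    field_simp
    ring
  have hγq : 2 / γ * (γ / (2 * q)) = q⁻¹ := by
    field_simp
  rw [mul_assoc _ ((2 / γ) ^ _), ← Real.mul_rpow (by positivity) (by positivity), hγq,
    Real.inv_rpow hq.le, ← Real.rpow_neg hq.le, hω_eq,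
    Real.mul_rpow (by linarith) (by positivity), ← Real.rpow_mul hq.le, hexp,
    Real.rpow_add hq, Real.rpow_one]
  field_simp
  ring

/-- the squared `L²` norm of `φ_ω`. -/
theorem stmt2 (γ p ω : ℝ) (hγ : 0 < γ) (hp : 1 < p) (hω : γ ^ 2 / 4 < ω) :
    (∫ x : ℝ, phi γ p ω x ^ 2) =
      4 / (p - 1) * ((p + 1) / 2) ^ (2 / (p - 1)) * (2 / γ) ^ ((p - 5) / (p - 1)) *
        ((γ / (2 * Real.sqrt ω)) ^ ((p - 5) / (p - 1)) *
          ∫ s in (γ / (2 * Real.sqrt ω))..1, (1 - s ^ 2) ^ (2 / (p - 1) - 1)) := by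
  have hω0 : 0 < ω := (by positivity : (0 : ℝ) ≤ γ ^ 2 / 4).trans_lt hω
  have hq : 0 < √ω := Real.sqrt_pos.2 hω0
  set a := (p - 1) * √ω / 2
  set ξ := γ / (2 * √ω)
  set k := 2 / (p - 1)
  set C := (p + 1) * ω / 2
  have ha : 0 < a := by have := sub_pos.2 hp; positivity
  have hξ : ξ ∈ Ioo (-1) 1 := by
    have hγq : γ < 2 * √ω := by nlinarith [Real.sq_sqrt hω0.le]
    exact ⟨by linarith [(by positivity : 0 < ξ)], (div_lt_one (by positivity)).2 hγq⟩
  have htanh : Real.tanh (artanh ξ) = ξ := by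
    rw [artanh_eq_real_artanh (Ioo_subset_Icc_self hξ), Real.tanh_artanh hξ]
  have hpointwise : ∀ x ∈ Ioi (0 : ℝ), phi γ p ω x ^ 2 = C ^ k / a *
      ((a * (1 / Real.cosh (a * x + artanh ξ)) ^ 2) •
        (1 - Real.tanh (a * x + artanh ξ) ^ 2) ^ (k - 1)) := by
    intro x hx
    rw [phi_sq (by linarith) hω0.le, abs_of_pos hx, Real.one_div_cosh_sq_rpow, smul_eq_mul,
      mul_assoc a, ← mul_assoc (C ^ k / a), div_mul_cancel₀ _ ha.ne']
  calc ∫ x, phi γ p ω x ^ 2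
      = 2 * ∫ x in Ioi 0, phi γ p ω x ^ 2 := by
        simpa only [phi_abs] using integral_comp_abs (f := fun x => phi γ p ω x ^ 2)
    _ = 2 * (C ^ k / a * ∫ s in Ioo ξ 1, (1 - s ^ 2) ^ (k - 1)) := by
        rw [setIntegral_congr_fun measurableSet_Ioi hpointwise, integral_const_mul,
          Real.integral_Ioi_comp_tanh_affine ha _ fun s => (1 - s ^ 2) ^ (k - 1), htanh]
    _ = _ := by
        rw [intervalIntegral.integral_of_le hξ.2.le, integral_Ioc_eq_integral_Ioo, ← mul_assoc,
          phi_sq_integral_coeff hγ hp hω0]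
        ring
end
end

section
/- Let γ > 0, p > 5 and ω > γ²/4. If v ∈ H¹(ℝ), v ≠ 0, E(v) > 0, K_ω(v) < 0 and P(v) = 0, then d(ω) < S_ω(v). -/
open MeasureTheory Set
open scoped ENNReal

noncomputable section

/-!
Under the `L²`-invariant scaling `v^λ(x) = λ^{1/2} v(λx)` the quantities `‖v'‖²`, `γ|v(0)|²` and
`‖v‖_{p+1}^{p+1}` scale like `λ²`, `λ` and `λ^{(p-1)/2}`, while `‖v‖²` is unchanged. Since
`K_ω(v^λ) → ω‖v‖² > 0` as `λ → 0` and `K_ω(v^1) < 0`, some `λ ∈ (0,1)` puts `v^λ` on the Nehari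
manifold, so `d(ω) ≤ S_ω(v^λ)`. Bounding `λ^{(p-1)/2}` from below by Bernoulli's inequality
and using `P(v) = 0` gives `E(v^λ) ≤ λ(2-λ) E(v)`, which is `< E(v)` because
`E(v) > 0`; hence `S_ω(v^λ) < S_ω(v)`.
-/

lemma mul_one_add_mul_sub_one_le_rpow {Q l : ℝ} (hQ : 2 ≤ Q) (hl : 0 < l) :
    l * (1 + (Q - 1) * (l - 1)) ≤ l ^ Q := by
  have bernoulli : 1 + (Q - 1) * (l - 1) ≤ l ^ (Q - 1) := by
    simpa using one_add_mul_self_le_rpow_one_add (s := l - 1) (by linarith) (p := Q - 1)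
      (by linarith)
  calc l * (1 + (Q - 1) * (l - 1)) ≤ l * l ^ (Q - 1) := mul_le_mul_of_nonneg_left bernoulli hl.le
    _ = l ^ Q := by rw [mul_comm, Real.rpow_sub_one hl.ne', div_mul_cancel₀ _ hl.ne']

lemma integral_comp_mul_left_of_pos {l : ℝ} (hl : 0 < l) (f : ℝ → ℝ) :
    ∫ x, f (l * x) = l⁻¹ * ∫ x, f x := by
  rw [Measure.integral_comp_mul_left, smul_eq_mul, abs_of_pos (inv_pos.2 hl)]

lemma memLp_comp_mul_left {E : Type*} [NormedAddCommGroup E] {q : ℝ≥0∞} {l : ℝ} (hl : l ≠ 0)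
    {g : ℝ → E} (hg : MemLp g q volume) : MemLp (fun x => g (l * x)) q volume := by
  refine MemLp.comp_of_map ?_ (measurable_const_mul l).aemeasurable
  rw [Real.map_volume_mul_left hl]
  exact hg.smul_measure ENNReal.ofReal_ne_top

lemma norm_sqrt_ofReal (l : ℝ) : ‖((Real.sqrt l : ℝ) : ℂ)‖ = Real.sqrt l := by
  rw [Complex.norm_real, Real.norm_of_nonneg (Real.sqrt_nonneg l)]

lemma l2Sq_pos {v : ℝ → ℂ} (hv : MemH1 v) (hv0 : v ≠ 0) : 0 < l2Sq v := by
  have hint : Integrable (fun x => ‖v x‖ ^ 2) volume := by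
    simpa using hv.2.1.integrable_norm_rpow two_ne_zero ENNReal.ofNat_ne_top
  obtain ⟨x₀, hx₀⟩ := Function.ne_iff.1 hv0
  have hopen : IsOpen {x : ℝ | v x ≠ 0} := isOpen_compl_singleton.preimage hv.1
  have hsupp : {x : ℝ | v x ≠ 0} ⊆ Function.support fun x => ‖v x‖ ^ 2 :=
    fun x hx => pow_ne_zero _ (norm_ne_zero_iff.2 hx)
  rw [l2Sq, integral_pos_iff_support_of_nonneg (fun x => by positivity) hint]
  exact (hopen.measure_pos volume ⟨x₀, hx₀⟩).trans_le (measure_mono hsupp)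

lemma lpPow_nonneg (p : ℝ) (v : ℝ → ℂ) : 0 ≤ lpPow p v :=
  integral_nonneg fun _ => Real.rpow_nonneg (norm_nonneg _) _

section Scale

variable {l : ℝ} (v : ℝ → ℂ)

lemma deriv_scale (x : ℝ) :
    deriv (scale l v) x = ((Real.sqrt l * l : ℝ) : ℂ) * deriv v (l * x) := by
  unfold scale
  rw [deriv_const_mul_field, deriv_comp_mul_left l v x, Complex.real_smul]
  push_cast
  ring

lemma norm_scale_zero_sq (hl : 0 < l) : ‖scale l v 0‖ ^ 2 = l * ‖v 0‖ ^ 2 := by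
  simp only [scale, mul_zero, norm_mul, norm_sqrt_ofReal, mul_pow, Real.sq_sqrt hl.le]

lemma l2Sq_scale (hl : 0 < l) : l2Sq (scale l v) = l2Sq v := by
  have hpt : ∀ x, ‖scale l v x‖ ^ 2 = l * ‖v (l * x)‖ ^ 2 := fun x => by
    rw [scale, norm_mul, norm_sqrt_ofReal, mul_pow, Real.sq_sqrt hl.le]
  simp only [l2Sq, hpt, integral_const_mul, integral_comp_mul_left_of_pos hl fun y => ‖v y‖ ^ 2,
    mul_inv_cancel_left₀ hl.ne']

lemma gradSq_scale (hl : 0 < l) : gradSq (scale l v) = l ^ 2 * gradSq v := by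
  have hpt : ∀ x, ‖deriv (scale l v) x‖ ^ 2 = l ^ 3 * ‖deriv v (l * x)‖ ^ 2 := fun x => by
    rw [deriv_scale, norm_mul, Complex.norm_real, Real.norm_of_nonneg (by positivity), mul_pow,
      mul_pow, Real.sq_sqrt hl.le]
    ring
  simp only [gradSq, hpt, integral_const_mul,
    integral_comp_mul_left_of_pos hl fun y => ‖deriv v y‖ ^ 2]
  field_simp

lemma lpPow_scale (p : ℝ) (hl : 0 < l) : lpPow p (scale l v) = l ^ ((p - 1) / 2) * lpPow p v := by
  have hpt : ∀ x, ‖scale l v x‖ ^ (p + 1) = l ^ ((p + 1) / 2) * ‖v (l * x)‖ ^ (p + 1) := fun x => by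
    rw [scale, norm_mul, norm_sqrt_ofReal, Real.mul_rpow (Real.sqrt_nonneg l) (norm_nonneg _),
      Real.sqrt_eq_rpow, ← Real.rpow_mul hl.le, one_div_mul_eq_div]
  simp only [lpPow, hpt, integral_const_mul,
    integral_comp_mul_left_of_pos hl fun y => ‖v y‖ ^ (p + 1), ← mul_assoc, ← Real.rpow_neg_one l, ← Real.rpow_add hl]
  ring_nf

end Scale

lemma memH1_scale {l : ℝ} (hl : 0 < l) {v : ℝ → ℂ} (hv : MemH1 v) : MemH1 (scale l v) := by
  obtain ⟨hcont, hmem, hderiv, hftc⟩ := hv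
  have hderiv_eq := funext (deriv_scale (l := l) v)
  refine ⟨by unfold scale; fun_prop, (memLp_comp_mul_left hl.ne' hmem).const_mul _,
    hderiv_eq ▸ (memLp_comp_mul_left hl.ne' hderiv).const_mul _, fun x => ?_⟩
  rw [hderiv_eq, intervalIntegral.integral_const_mul,
    intervalIntegral.integral_comp_mul_left (fun t => deriv v t) hl.ne', Complex.real_smul]
  simp only [scale, mul_zero, hftc (l * x)]
  have : (l : ℂ) ≠ 0 := by exact_mod_cast hl.ne'
  push_cast
  field_simp

lemma exists_scale_Kfun_eq_zero {γ p ω : ℝ} (hp : 1 < p) (hω : 0 < ω) {v : ℝ → ℂ} (hv : MemH1 v)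
    (hv0 : v ≠ 0) (hK : Kfun γ p ω v < 0) : ∃ l ∈ Ioo 0 1, Kfun γ p ω (scale l v) = 0 := by
  set k : ℝ → ℝ := fun s =>
    s ^ 2 * gradSq v + ω * l2Sq v - γ * (s * ‖v 0‖ ^ 2) - s ^ ((p - 1) / 2) * lpPow p v
  have hQ : 0 < (p - 1) / 2 := by linarith
  have hk_cont : ContinuousOn k (Icc 0 1) :=
    (Continuous.continuousOn (by fun_prop)).sub
      ((continuousOn_id.rpow_const fun _ _ => Or.inr hQ.le).mul continuousOn_const)
  have hk0 : 0 < k 0 := by simpa [k, Real.zero_rpow hQ.ne'] using mul_pos hω (l2Sq_pos hv hv0)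
  have hk1 : k 1 < 0 := by simpa [k, Kfun] using hK
  obtain ⟨l, ⟨hl0, hl1⟩, hkl⟩ :=
    intermediate_value_Icc' zero_le_one hk_cont ⟨hk1.le, hk0.le⟩
  have hl_pos : 0 < l := hl0.lt_of_ne (by rintro rfl; exact hk0.ne' hkl)
  refine ⟨l, ⟨hl_pos, hl1.lt_of_ne (by rintro rfl; exact hk1.ne hkl)⟩, ?_⟩
  rw [Kfun, gradSq_scale v hl_pos, l2Sq_scale v hl_pos, norm_scale_zero_sq v hl_pos,
    lpPow_scale v p hl_pos]
  exact hkl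

lemma En_scale_le {γ p l : ℝ} (hp : 5 ≤ p) (hl : 0 < l) {v : ℝ → ℂ} (hP : Pfun γ p v = 0) :
    En γ p (scale l v) ≤ l * (2 - l) * En γ p v := by
  have hp1 : 0 < p + 1 := by linarith
  have hbern := mul_one_add_mul_sub_one_le_rpow (Q := (p - 1) / 2) (by linarith) hl
  have hb := mul_le_mul_of_nonneg_right hbern (div_nonneg (lpPow_nonneg p v) hp1.le)
  rw [En, gradSq_scale v hl, norm_scale_zero_sq v hl, lpPow_scale v p hl, En]
  rw [Pfun] at hP
  -- the quadratic bound is exact at `l = 1`, and `P(v) = 0` makes it tangent there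
  have key : l ^ 2 * gradSq v / 2 - γ / 2 * (l * ‖v 0‖ ^ 2)
      - l * (1 + ((p - 1) / 2 - 1) * (l - 1)) * (lpPow p v / (p + 1))
      = l * (2 - l) * (gradSq v / 2 - γ / 2 * ‖v 0‖ ^ 2 - lpPow p v / (p + 1)) := by
    field_simp at hP ⊢
    linear_combination (l - 1) * hP
  calc _ = l ^ 2 * gradSq v / 2 - γ / 2 * (l * ‖v 0‖ ^ 2)
        - l ^ ((p - 1) / 2) * (lpPow p v / (p + 1)) := by ring
    _ ≤ _ := by linarith

lemma Sfun_eq_of_Kfun_eq_zero {γ p ω : ℝ} (hp : p + 1 ≠ 0) {u : ℝ → ℂ}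
    (hK : Kfun γ p ω u = 0) : Sfun γ p ω u = (p - 1) / (2 * (p + 1)) * lpPow p u := by
  rw [Kfun] at hK
  rw [Sfun, En]
  field_simp
  linear_combination (p + 1) * hK

lemma dInf_le {γ p ω : ℝ} (hp : 1 < p) {u : ℝ → ℂ} (hu : MemH1 u) (hu0 : u ≠ 0)
    (hK : Kfun γ p ω u = 0) : dInf γ p ω ≤ Sfun γ p ω u := by
  refine csInf_le ⟨0, ?_⟩ ⟨u, hu, hu0, hK, rfl⟩
  rintro _ ⟨w, -, -, hKw, rfl⟩
  rw [Sfun_eq_of_Kfun_eq_zero (by linarith) hKw]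
  exact mul_nonneg (div_nonneg (by linarith) (by linarith)) (lpPow_nonneg p w)

theorem stmt9_general (γ p ω : ℝ) (hp : 5 < p) (hω : γ ^ 2 / 4 < ω)
    (v : ℝ → ℂ) (hv : MemH1 v) (hv0 : v ≠ 0)
    (hE : 0 < En γ p v) (hK : Kfun γ p ω v < 0) (hP : Pfun γ p v = 0) :
    dInf γ p ω < Sfun γ p ω v := by
  have hω0 : 0 < ω := (by positivity : 0 ≤ γ ^ 2 / 4).trans_lt hω
  obtain ⟨l, ⟨hl0, hl1⟩, hKl⟩ := exists_scale_Kfun_eq_zero (by linarith) hω0 hv hv0 hK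
  have hl2 : l2Sq (scale l v) = l2Sq v := l2Sq_scale v hl0
  have hw0 : scale l v ≠ 0 := fun h => (l2Sq_pos hv hv0).ne' (by rw [← hl2, h]; simp [l2Sq])
  have hE_lt : En γ p (scale l v) < En γ p v := by
    have := En_scale_le hp.le hl0 hP
    nlinarith [mul_pos (pow_pos (sub_pos.2 hl1) 2) hE]
  calc dInf γ p ω ≤ Sfun γ p ω (scale l v) := dInf_le (by linarith) (memH1_scale hl0 hv) hw0 hKl
    _ < Sfun γ p ω v := by rw [Sfun, Sfun, hl2]; linarith

/-- `d(ω) < S_ω(v)` for `v` with `E(v) > 0`, `K_ω(v) < 0`, `P(v) = 0`. -/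
theorem stmt9 (γ p ω : ℝ) (hγ : 0 < γ) (hp : 5 < p) (hω : γ ^ 2 / 4 < ω)
    (v : ℝ → ℂ) (hv : MemH1 v) (hv0 : v ≠ 0)
    (hE : 0 < En γ p v) (hK : Kfun γ p ω v < 0) (hP : Pfun γ p v = 0) :
    dInf γ p ω < Sfun γ p ω v :=
  stmt9_general γ p ω hp hω v hv hv0 hE hK hP
end
end
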